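/- Let P be an n×n symmetric real matrix of rank d whose entries satisfy c1·ρ ≤ P_{ij} ≤ c2·ρ for all i,j, for constants c1 > 0, 0 < c2 ≤ 1 and some ρ ∈ (0,1], and whose condition number satisfies σ1(P)/σd(P) ≤ c0. Let U_P be an n×d matrix whose columns are orthonormal eigenvectors of P corresponding to its d nonzero eigenvalues, and let D_P be the d×d diagonal matrix of those eigenvalues (in the matching column order). Then ‖U_P·|D_P|^{1/2}‖_{2→∞} ≤ (c0·c2^{3/2}/c1)·ρ^{1/2}, where |D_P|^{1/2} is the diagonal matrix of square roots of the absolute values of the eigenvalues. -/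

import Mathlib

/-! With `A = PᵀP = P²`, the singular values of `P` are the square roots of the eigenvalues
of `A`. The Rayleigh quotient of the all-ones vector gives `σ₁(P) ≥ n c1 ρ`. A nonzero
eigenvalue `λ` of `P` gives the nonzero eigenvalue `λ²` of `A`, and `A` has exactly
`d = rank P` nonzero eigenvalues, so `|λ| ≥ σ_d(P) ≥ σ₁(P) / c0`. By Bessel's inequality for
the orthonormal columns of `U`, row `i` of `U |D_P|^{1/2}` then has squared norm
`∑ⱼ U_ij² |λⱼ| ≤ σ_d⁻¹ ∑ⱼ (PU)_ij² ≤ σ_d⁻¹ ∑ⱼ P_ij² ≤ c0 n (c2 ρ)² / (n c1 ρ)`,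
and the extra factor `c0 c2 / c1 ≥ 1` in the claimed bound only weakens it. -/

open Matrix

noncomputable section

/-- The two-to-infinity norm of a real matrix: the maximum Euclidean row norm. -/
def twoInfNorm {α β : Type*} [Fintype α] [Fintype β] (M : Matrix α β ℝ) : ℝ :=
  ⨆ i, Real.sqrt (∑ j, (M i j) ^ 2)

/-- `sval M i` is the `(i+1)`-th largest singular value of the square real matrix `M`
(so `sval M 0 = σ₁(M)`), and `0` if `i` is out of range.  It is defined as the square root of
the `(i+1)`-th largest eigenvalue of `Mᵀ M`. -/
def sval {k : ℕ} (M : Matrix (Fin k) (Fin k) ℝ) (i : ℕ) : ℝ :=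
  if h : i < k then
    Real.sqrt
      (((show (Mᵀ * M).IsHermitian by
          simpa using Matrix.isHermitian_conjTranspose_mul_self M).eigenvalues ∘
        Tuple.sort fun j => -(show (Mᵀ * M).IsHermitian by
          simpa using Matrix.isHermitian_conjTranspose_mul_self M).eigenvalues j) ⟨i, h⟩)
  else 0

open Finset

open MatrixOrder in
lemma Matrix.IsHermitian.dotProduct_mulVec_le {n : Type*} [Fintype n] [DecidableEq n]
    {A : Matrix n n ℝ} (hA : A.IsHermitian) {c : ℝ} (hc : ∀ i, hA.eigenvalues i ≤ c)
    (x : n → ℝ) : x ⬝ᵥ A *ᵥ x ≤ c * (x ⬝ᵥ x) := by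
  have hle : A ≤ algebraMap ℝ _ c :=
    le_algebraMap_of_spectrum_le (by
      rw [hA.spectrum_real_eq_range_eigenvalues]
      rintro _ ⟨i, rfl⟩
      exact hc i) hA.isSelfAdjoint
  have := (Matrix.le_iff.mp hle).dotProduct_mulVec_nonneg x
  simp only [star_trivial, Algebra.algebraMap_eq_smul_one, sub_mulVec, smul_mulVec,
    one_mulVec, dotProduct_sub, dotProduct_smul, smul_eq_mul] at this
  linarith

lemma Matrix.IsHermitian.exists_eigenvalues_eq {n : Type*} [Fintype n] [DecidableEq n]
    {A : Matrix n n ℝ} (hA : A.IsHermitian) {μ : ℝ} {v : n → ℝ} (hv : v ≠ 0)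
    (h : A *ᵥ v = μ • v) : ∃ i, hA.eigenvalues i = μ := by
  have : μ ∈ spectrum ℝ A := by
    rw [← spectrum_toLin']
    exact (Module.End.hasEigenvalue_of_hasEigenvector
      ⟨Module.End.mem_eigenspace_iff.mpr (by simpa using h), hv⟩).mem_spectrum
  rwa [hA.spectrum_real_eq_range_eigenvalues] at this

lemma Fin.iff_lt_card_filter_of_antitone {k : ℕ} {p : Fin k → Prop} [DecidablePred p]
    (hp : Antitone p) (j : Fin k) : p j ↔ (j : ℕ) < #{i | p i} := by
  constructor
  · intro hj
    have : Iic j ⊆ ({i | p i} : Finset (Fin k)) := fun i hi =>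
      mem_filter.mpr ⟨mem_univ _, hp (mem_Iic.mp hi) hj⟩
    simpa [Fin.card_Iic] using card_le_card this
  · intro hj
    by_contra hpj
    have : ({i | p i} : Finset (Fin k)) ⊆ Iio j := fun i hi =>
      mem_Iio.mpr (lt_of_not_ge fun hji => hpj (hp hji (mem_filter.mp hi).2))
    have := card_le_card this
    rw [Fin.card_Iio] at this
    omega

namespace Matrix.IsHermitian

variable {k : ℕ} {A : Matrix (Fin k) (Fin k) ℝ} (hA : A.IsHermitian)

def sortedEigenvalues : Fin k → ℝ :=
  hA.eigenvalues ∘ Tuple.sort fun j => -hA.eigenvalues j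

lemma sortedEigenvalues_antitone : Antitone hA.sortedEigenvalues := fun _ _ hij =>
  neg_le_neg_iff.mp (Tuple.monotone_sort (fun j => -hA.eigenvalues j) hij)

lemma exists_sortedEigenvalues_eq (i : Fin k) :
    ∃ j, hA.sortedEigenvalues j = hA.eigenvalues i :=
  ⟨(Tuple.sort fun j => -hA.eigenvalues j).symm i, by simp [sortedEigenvalues]⟩

lemma card_sortedEigenvalues_ne_zero : #{j | hA.sortedEigenvalues j ≠ 0} = A.rank := by
  rw [hA.rank_eq_card_non_zero_eigs, ← Fintype.card_subtype]
  exact Fintype.card_congr ((Tuple.sort _).subtypeEquiv fun _ => Iff.rfl)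

lemma eigenvalues_le_sortedEigenvalues_zero (hk : 0 < k) (i : Fin k) :
    hA.eigenvalues i ≤ hA.sortedEigenvalues ⟨0, hk⟩ := by
  obtain ⟨j, hj⟩ := hA.exists_sortedEigenvalues_eq i
  exact hj ▸ hA.sortedEigenvalues_antitone (Nat.zero_le j)

end Matrix.IsHermitian

lemma Matrix.PosSemidef.sortedEigenvalues_nonneg {k : ℕ} {A : Matrix (Fin k) (Fin k) ℝ}
    (hA : A.PosSemidef) (j : Fin k) : 0 ≤ hA.isHermitian.sortedEigenvalues j :=
  hA.eigenvalues_nonneg _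

lemma Matrix.PosSemidef.sortedEigenvalues_ne_zero_iff {k : ℕ} {A : Matrix (Fin k) (Fin k) ℝ}
    (hA : A.PosSemidef) (j : Fin k) :
    hA.isHermitian.sortedEigenvalues j ≠ 0 ↔ (j : ℕ) < A.rank := by
  rw [← hA.isHermitian.card_sortedEigenvalues_ne_zero]
  refine Fin.iff_lt_card_filter_of_antitone (p := (hA.isHermitian.sortedEigenvalues · ≠ 0))
    (fun i j hij hj => ?_) j
  exact (lt_of_lt_of_le (lt_of_le_of_ne (hA.sortedEigenvalues_nonneg j) (Ne.symm hj))
    (hA.isHermitian.sortedEigenvalues_antitone hij)).ne'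

lemma Matrix.posSemidef_transpose_mul_self {m n : Type*} [Fintype m] [Fintype n]
    (M : Matrix m n ℝ) : (Mᵀ * M).PosSemidef := by
  simpa using posSemidef_conjTranspose_mul_self M

section SingularValues

variable {k : ℕ} (M : Matrix (Fin k) (Fin k) ℝ)

lemma sval_of_lt {i : ℕ} (h : i < k) :
    sval M i = √((posSemidef_transpose_mul_self M).isHermitian.sortedEigenvalues ⟨i, h⟩) := by
  rw [sval, dif_pos h]
  rfl

lemma sval_of_le {i : ℕ} (h : k ≤ i) : sval M i = 0 := by
  rw [sval, dif_neg (not_lt.mpr h)]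

lemma sval_nonneg (i : ℕ) : 0 ≤ sval M i := by
  unfold sval
  split_ifs <;> positivity

lemma sval_antitone : Antitone (sval M) := by
  intro i j hij
  rcases lt_or_ge j k with hj | hj
  · rw [sval_of_lt M hj, sval_of_lt M (hij.trans_lt hj)]
    exact Real.sqrt_le_sqrt
      ((posSemidef_transpose_mul_self M).isHermitian.sortedEigenvalues_antitone hij)
  · rw [sval_of_le M hj]
    exact sval_nonneg M i

lemma sval_pos_iff {i : ℕ} : 0 < sval M i ↔ i < M.rank := by
  rcases lt_or_ge i k with hi | hi
  · rw [sval_of_lt M hi, Real.sqrt_pos, ← rank_transpose_mul_self M,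
      ← (posSemidef_transpose_mul_self M).sortedEigenvalues_ne_zero_iff ⟨i, hi⟩]
    exact ⟨ne_of_gt, fun h =>
      lt_of_le_of_ne ((posSemidef_transpose_mul_self M).sortedEigenvalues_nonneg _) h.symm⟩
  · rw [sval_of_le M hi]
    simpa using (M.rank_le_card_width.trans (by simpa using hi))

lemma mulVec_dotProduct_self_le_sval_zero_sq (x : Fin k → ℝ) :
    (M *ᵥ x) ⬝ᵥ (M *ᵥ x) ≤ sval M 0 ^ 2 * (x ⬝ᵥ x) := by
  rcases Nat.eq_zero_or_pos k with rfl | hk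
  · simp [dotProduct]
  have hA := M.posSemidef_transpose_mul_self
  have hgram : x ⬝ᵥ (Mᵀ * M) *ᵥ x = (M *ᵥ x) ⬝ᵥ (M *ᵥ x) := by
    rw [← mulVec_mulVec, dotProduct_mulVec, vecMul_transpose]
  rw [← hgram, sval_of_lt M hk, Real.sq_sqrt (hA.sortedEigenvalues_nonneg _)]
  exact hA.isHermitian.dotProduct_mulVec_le
    (hA.isHermitian.eigenvalues_le_sortedEigenvalues_zero hk) x

lemma natCast_mul_le_sval_zero {a : ℝ} (ha : 0 ≤ a) (h : ∀ i j, a ≤ M i j) :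
    k * a ≤ sval M 0 := by
  rcases Nat.eq_zero_or_pos k with rfl | hk
  · simpa using sval_nonneg M 0
  have hrow : ∀ i, k * a ≤ (M *ᵥ fun _ => 1) i := fun i => by
    simpa [mulVec, dotProduct] using Finset.sum_le_sum fun j (_ : j ∈ univ) => h i j
  have hsum : k * (k * a) ^ 2 ≤ k * sval M 0 ^ 2 := by
    calc k * (k * a) ^ 2 = ∑ _i : Fin k, (k * a) ^ 2 := by simp
      _ ≤ (M *ᵥ fun _ => 1) ⬝ᵥ (M *ᵥ fun _ => 1) := by
        rw [dotProduct]
        gcongr with i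
        have hka : 0 ≤ (k : ℝ) * a := by positivity
        simpa [sq] using mul_le_mul (hrow i) (hrow i) hka (hka.trans (hrow i))
      _ ≤ k * sval M 0 ^ 2 := by
        simpa [dotProduct, mul_comm] using mulVec_dotProduct_self_le_sval_zero_sq M fun _ => 1
  exact (pow_le_pow_iff_left₀ (by positivity) (sval_nonneg M 0) two_ne_zero).mp
    (le_of_mul_le_mul_left hsum (by exact_mod_cast hk))

lemma sval_rank_sub_one_mul_abs_le (hM : M.IsSymm) {μ : ℝ} {v : Fin k → ℝ} (hv : v ≠ 0)
    (h : M *ᵥ v = μ • v) : sval M (M.rank - 1) * |μ| ≤ μ ^ 2 := by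
  rcases eq_or_ne μ 0 with rfl | hμ
  · simp
  have hA := M.posSemidef_transpose_mul_self
  have hgram : (Mᵀ * M) *ᵥ v = μ ^ 2 • v := by
    rw [hM.eq, ← mulVec_mulVec, h, mulVec_smul, h, smul_smul, sq]
  obtain ⟨i, hi⟩ := hA.isHermitian.exists_eigenvalues_eq hv hgram
  obtain ⟨j, hj⟩ := hA.isHermitian.exists_sortedEigenvalues_eq i
  have hjrank : (j : ℕ) < M.rank := by
    rw [← rank_transpose_mul_self M, ← hA.sortedEigenvalues_ne_zero_iff, hj, hi]
    exact pow_ne_zero 2 hμ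
  have hrank_le : M.rank ≤ k := by simpa using M.rank_le_card_width
  have hsval : sval M (M.rank - 1) ≤ |μ| := by
    rw [sval_of_lt M (by omega), ← Real.sqrt_sq_eq_abs, ← hi, ← hj]
    exact Real.sqrt_le_sqrt
      (hA.isHermitian.sortedEigenvalues_antitone (Fin.mk_le_mk.mpr (by omega)))
  calc sval M (M.rank - 1) * |μ| ≤ |μ| * |μ| := by gcongr
    _ = μ ^ 2 := by rw [abs_mul_abs_self, sq]

end SingularValues

lemma twoInfNorm_le {α β : Type*} [Fintype α] [Fintype β] {M : Matrix α β ℝ} {r : ℝ}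
    (hr : 0 ≤ r) (h : ∀ i, ∑ j, M i j ^ 2 ≤ r ^ 2) : twoInfNorm M ≤ r :=
  Real.iSup_le (fun i => (Real.sqrt_le_left hr).mpr (h i)) hr

lemma Matrix.vecMul_dotProduct_self_le {m κ : Type*} [Fintype m] [Fintype κ] [DecidableEq κ]
    {U : Matrix m κ ℝ} (hU : Uᵀ * U = 1) (b : m → ℝ) :
    (b ᵥ* U) ⬝ᵥ (b ᵥ* U) ≤ b ⬝ᵥ b := by
  set y := b ᵥ* U
  have hUy : (U *ᵥ y) ⬝ᵥ (U *ᵥ y) = y ⬝ᵥ y := by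
    rw [dotProduct_mulVec, ← mulVec_transpose, mulVec_mulVec, hU, one_mulVec]
  have hby : b ⬝ᵥ (U *ᵥ y) = y ⬝ᵥ y := by rw [dotProduct_mulVec]
  have := dotProduct_self_star_nonneg (b - U *ᵥ y)
  simp only [star_trivial, dotProduct_sub, sub_dotProduct, hUy, hby, dotProduct_comm _ b] at this
  linarith

lemma sum_sq_mul_abs_mul_sval_le {n d : ℕ} {P : Matrix (Fin n) (Fin n) ℝ} (hP : P.IsSymm)
    {U : Matrix (Fin n) (Fin d) ℝ} (hU : Uᵀ * U = 1) {lam : Fin d → ℝ}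
    (hUeig : ∀ j, P *ᵥ Uᵀ j = lam j • Uᵀ j) (i : Fin n) :
    (∑ j, U i j ^ 2 * |lam j|) * sval P (P.rank - 1) ≤ ∑ j, P i j ^ 2 := by
  have hcol : ∀ j, Uᵀ j ≠ 0 := fun j hj => by
    have h := congrFun (congrFun hU j) j
    have hzero : ∀ k, U k j = 0 := fun k => congrFun hj k
    simp [mul_apply, hzero] at h
  have hPU : ∀ j, (P i ᵥ* U) j = lam j * U i j := fun j => by
    simpa [mulVec, vecMul, dotProduct, mul_comm] using congrFun (hUeig j) i
  calc (∑ j, U i j ^ 2 * |lam j|) * sval P (P.rank - 1)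
      = ∑ j, U i j ^ 2 * (sval P (P.rank - 1) * |lam j|) := by
        rw [sum_mul]; exact sum_congr rfl fun j _ => by ring
    _ ≤ ∑ j, U i j ^ 2 * lam j ^ 2 := by
        gcongr with j
        exact sval_rank_sub_one_mul_abs_le P hP (hcol j) (hUeig j)
    _ = (P i ᵥ* U) ⬝ᵥ (P i ᵥ* U) := by
        simp only [dotProduct, hPU]; exact sum_congr rfl fun j _ => by ring
    _ ≤ P i ⬝ᵥ P i := vecMul_dotProduct_self_le hU (P i)
    _ = ∑ j, P i j ^ 2 := by simp [dotProduct, sq]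

lemma sum_sq_mul_abs_mul_le_of_entries_bounded {n d : ℕ} {P : Matrix (Fin n) (Fin n) ℝ}
    (hP : P.IsSymm) {U : Matrix (Fin n) (Fin d) ℝ} (hU : Uᵀ * U = 1) {lam : Fin d → ℝ}
    (hUeig : ∀ j, P *ᵥ Uᵀ j = lam j • Uᵀ j) {a b κ : ℝ} (ha : 0 ≤ a) (hκ : 0 ≤ κ)
    (hent : ∀ i j, a ≤ P i j ∧ P i j ≤ b) (hcond : sval P 0 ≤ κ * sval P (P.rank - 1))
    (i : Fin n) : (∑ j, U i j ^ 2 * |lam j|) * a ≤ κ * b ^ 2 := by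
  set S := ∑ j, U i j ^ 2 * |lam j|
  have hS : 0 ≤ S := by positivity
  have hProw : ∑ j, P i j ^ 2 ≤ n * b ^ 2 := by
    calc ∑ j, P i j ^ 2 ≤ ∑ _j : Fin n, b ^ 2 := sum_le_sum fun j _ =>
          pow_le_pow_left₀ (ha.trans (hent i j).1) (hent i j).2 2
      _ = n * b ^ 2 := by simp
  have hσ1 := natCast_mul_le_sval_zero P ha fun i j => (hent i j).1
  have key : n * (S * a) ≤ n * (κ * b ^ 2) := by
    calc n * (S * a) = S * (n * a) := by ring
      _ ≤ S * (κ * sval P (P.rank - 1)) := mul_le_mul_of_nonneg_left (hσ1.trans hcond) hS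
      _ = κ * (S * sval P (P.rank - 1)) := by ring
      _ ≤ κ * (n * b ^ 2) :=
        mul_le_mul_of_nonneg_left ((sum_sq_mul_abs_mul_sval_le hP hU hUeig i).trans hProw) hκ
      _ = n * (κ * b ^ 2) := by ring
  exact le_of_mul_le_mul_left key (by have := i.pos; positivity)

theorem stmt_1_general (n d : ℕ) (P : Matrix (Fin n) (Fin n) ℝ) (hPsymm : P.IsSymm)
    (hrank : P.rank = d)
    (ρ c1 c2 c0 : ℝ) (hc1 : 0 < c1) (hc2pos : 0 < c2)
    (hρpos : 0 < ρ)
    (hent : ∀ i j, c1 * ρ ≤ P i j ∧ P i j ≤ c2 * ρ)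
    (hcond : sval P 0 / sval P (d - 1) ≤ c0)
    (U : Matrix (Fin n) (Fin d) ℝ) (lam : Fin d → ℝ)
    (hUorth : Uᵀ * U = 1)
    (hUeig : ∀ i : Fin d,
      P.mulVec (fun r => U r i) = lam i • (fun r => U r i)) :
    twoInfNorm (U * Matrix.diagonal fun i => Real.sqrt |lam i|) ≤
      (c0 * (c2 * Real.sqrt c2) / c1) * Real.sqrt ρ := by
  have hc0 : 0 ≤ c0 := (div_nonneg (sval_nonneg P 0) (sval_nonneg P _)).trans hcond
  refine twoInfNorm_le (by positivity) fun i => ?_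
  have hσ1 : 0 < sval P 0 := lt_of_lt_of_le (by have := i.pos; positivity)
    (natCast_mul_le_sval_zero P (by positivity) fun i j => (hent i j).1)
  have hσd : 0 < sval P (d - 1) :=
    (sval_pos_iff P).mpr (by have := (sval_pos_iff P).mp hσ1; omega)
  have hc0_one : 1 ≤ c0 := ((one_le_div hσd).mpr (sval_antitone P (Nat.zero_le _))).trans hcond
  have hc1c2 : c1 ≤ c2 := le_of_mul_le_mul_right ((hent i i).1.trans (hent i i).2) hρpos
  have hrow : (∑ j, U i j ^ 2 * |lam j|) * c1 ≤ c0 * c2 ^ 2 * ρ := by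
    refine le_of_mul_le_mul_right ?_ hρpos
    linear_combination sum_sq_mul_abs_mul_le_of_entries_bounded hPsymm hUorth hUeig
      (by positivity) hc0 hent (hrank ▸ (div_le_iff₀ hσd).mp hcond) i
  have hsum : ∑ j, (U * diagonal fun j => √|lam j|) i j ^ 2 = ∑ j, U i j ^ 2 * |lam j| := by
    simp [mul_diagonal, mul_pow, Real.sq_sqrt (abs_nonneg _)]
  have hrhs : ((c0 * (c2 * √c2) / c1) * √ρ) ^ 2 = c0 ^ 2 * c2 ^ 3 * ρ / c1 ^ 2 := by
    rw [mul_pow, div_pow, mul_pow, mul_pow, Real.sq_sqrt hc2pos.le, Real.sq_sqrt hρpos.le]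
    ring
  rw [hsum, hrhs, le_div_iff₀ (by positivity)]
  calc (∑ j, U i j ^ 2 * |lam j|) * c1 ^ 2
        = ((∑ j, U i j ^ 2 * |lam j|) * c1) * c1 := by ring
    _ ≤ (c0 * c2 ^ 2 * ρ) * c1 := by gcongr
    _ ≤ (c0 * c2 ^ 2 * ρ) * (c0 * c2) := by
        gcongr
        exact hc1c2.trans (le_mul_of_one_le_left hc2pos.le hc0_one)
    _ = c0 ^ 2 * c2 ^ 3 * ρ := by ring

/-- If `P` is an `n × n` symmetric matrix of rank `d` with entries in
`[c1·ρ, c2·ρ]` and condition number `σ₁(P)/σ_d(P) ≤ c0`, `U` is an `n × d` matrix whose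
columns are orthonormal eigenvectors of `P` with nonzero eigenvalues `lam i`, and `D_P` is the
diagonal matrix of those eigenvalues, then
`‖U·|D_P|^{1/2}‖_{2→∞} ≤ (c0·c2^{3/2}/c1)·ρ^{1/2}`. -/
theorem stmt_1 (n d : ℕ) (P : Matrix (Fin n) (Fin n) ℝ) (hPsymm : P.IsSymm)
    (hrank : P.rank = d)
    (ρ c1 c2 c0 : ℝ) (hc1 : 0 < c1) (hc2pos : 0 < c2) (hc2 : c2 ≤ 1)
    (hρpos : 0 < ρ) (hρ : ρ ≤ 1)
    (hent : ∀ i j, c1 * ρ ≤ P i j ∧ P i j ≤ c2 * ρ)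
    (hcond : sval P 0 / sval P (d - 1) ≤ c0)
    (U : Matrix (Fin n) (Fin d) ℝ) (lam : Fin d → ℝ)
    (hUorth : Uᵀ * U = 1)
    (hlam : ∀ i, lam i ≠ 0)
    (hUeig : ∀ i : Fin d,
      P.mulVec (fun r => U r i) = lam i • (fun r => U r i)) :
    twoInfNorm (U * Matrix.diagonal fun i => Real.sqrt |lam i|) ≤
      (c0 * (c2 * Real.sqrt c2) / c1) * Real.sqrt ρ :=
  stmt_1_general n d P hPsymm hrank ρ c1 c2 c0 hc1 hc2pos hρpos hent hcond U lam hUorth hUeig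

end
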